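/- arXiv:2408.16404 — 3 statements merged into one kernel-verified Lean document; each statement's English description precedes it below -/
import Mathlib

section
/- Let I = [−1/2, 1/2] ⊆ ℝ. For each k ∈ ℕ let μ_k be the Borel measure on ℝ^ℕ obtained, via the identification ℝ^ℕ ≅ ℝ^k × ℝ^{{i : i > k}}, as the product of k-dimensional Lebesgue measure on ℝ^k with the countable product of copies of the uniform probability measure on I (Lebesgue measure restricted to I) on the remaining coordinates. Let ℝ_I^k = {x ∈ ℝ^ℕ : x_i ∈ I for all i > k}. Then the sequence k ↦ μ_k(A ∩ ℝ_I^k) is nondecreasing for every Borel set A ⊆ ℝ^ℕ, and the set function m(A) := sup_k μ_k(A ∩ ℝ_I^k) is a countably additive measure on the Borel σ-algebra of ℝ^ℕ (with the product topology). -/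
open MeasureTheory
open scoped ENNReal

/-- The interval `I = [-1/2, 1/2]`. -/
def Icube : Set ℝ := Set.Icc (-(1 / 2) : ℝ) (1 / 2)

/-- `ℝ_I^k`: the sequences whose coordinates beyond the first `k` lie in `I`. -/
def RIn (k : ℕ) : Set (ℕ → ℝ) := {x | ∀ i, k ≤ i → x i ∈ Icube}

/-- `μₖ` is the product of `k`-dimensional Lebesgue measure on the first `k`
coordinates with the countable product of copies of the uniform probability measure
on `I = [-1/2, 1/2]` (one-dimensional Lebesgue measure restricted to `I`) on the
remaining coordinates.  This is characterized (uniquely, by the π-system of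
measurable cylinders together with the σ-finite exhaustion by cylinders with bounded
first `k` coordinates) by the product formula on measurable cylinders
`{x | ∀ i < m, x i ∈ A i}` for `m ≥ k`. -/
def IsProdWithUniform (k : ℕ) (μk : Measure (ℕ → ℝ)) : Prop :=
  ∀ m : ℕ, k ≤ m → ∀ A : ℕ → Set ℝ, (∀ i, MeasurableSet (A i)) →
    μk {x | ∀ i, i < m → x i ∈ A i} =
      (∏ i ∈ Finset.range k, volume (A i)) * ∏ i ∈ Finset.Ico k m, volume (A i ∩ Icube)

/-- The set function `m(A) = sup_k μₖ(A ∩ ℝ_I^k)`. -/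
noncomputable def mSup (μ : ℕ → Measure (ℕ → ℝ)) (A : Set (ℕ → ℝ)) : ℝ≥0∞ :=
  ⨆ k, μ k (A ∩ RIn k)

namespace MSupAux

/-- Cylinder sets. -/
def Cyl (m : ℕ) (A : ℕ → Set ℝ) : Set (ℕ → ℝ) := {x | ∀ i, i < m → x i ∈ A i}

lemma measurableSet_Icube : MeasurableSet Icube := measurableSet_Icc

lemma volume_Icube : volume Icube = 1 := by
  rw [Icube, Real.volume_Icc]
  norm_num

lemma measurableSet_Cyl {m : ℕ} {A : ℕ → Set ℝ} (hA : ∀ i, MeasurableSet (A i)) :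
    MeasurableSet (Cyl m A) := by
  have h : Cyl m A = ⋂ i ∈ Finset.range m, (fun x : ℕ → ℝ => x i) ⁻¹' A i := by
    ext x; simp [Cyl]
  rw [h]
  exact MeasurableSet.biInter (Set.to_countable _)
    fun i _ => (measurable_pi_apply i) (hA i)

lemma measurableSet_RIn (k : ℕ) : MeasurableSet (RIn k) := by
  have h : RIn k = ⋂ i, {x : ℕ → ℝ | k ≤ i → x i ∈ Icube} := by
    ext x; simp [RIn]
  rw [h]
  refine MeasurableSet.iInter fun i => ?_
  by_cases hki : k ≤ i
  · have : {x : ℕ → ℝ | k ≤ i → x i ∈ Icube} = (fun x : ℕ → ℝ => x i) ⁻¹' Icube := by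
      ext x; simp [hki]
    rw [this]; exact (measurable_pi_apply i) measurableSet_Icube
  · have : {x : ℕ → ℝ | k ≤ i → x i ∈ Icube} = Set.univ := by
      ext x; simp [hki]
    rw [this]; exact MeasurableSet.univ

/-- The π-system of measurable cylinders. -/
def cylSystem : Set (Set (ℕ → ℝ)) :=
  {s | ∃ m A, (∀ i, MeasurableSet (A i)) ∧ s = Cyl m A}

lemma isPiSystem_cylSystem : IsPiSystem cylSystem := by
  rintro s ⟨m1, A1, hA1, rfl⟩ t ⟨m2, A2, hA2, rfl⟩ -
  refine ⟨max m1 m2,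
    fun i => (if i < m1 then A1 i else Set.univ) ∩ (if i < m2 then A2 i else Set.univ),
    fun i => ?_, ?_⟩
  · refine MeasurableSet.inter ?_ ?_ <;> split <;>
      first | exact hA1 _ | exact hA2 _ | exact MeasurableSet.univ
  · ext x
    simp only [Cyl, Set.mem_inter_iff, Set.mem_setOf_eq]
    constructor
    · rintro ⟨h1, h2⟩ i _
      constructor
      · split
        · exact h1 i ‹_›
        · trivial
      · split
        · exact h2 i ‹_›
        · trivial
    · intro h
      constructor
      · intro i hi
        have := (h i (lt_of_lt_of_le hi (le_max_left _ _))).1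
        simpa [hi] using this
      · intro i hi
        have := (h i (lt_of_lt_of_le hi (le_max_right _ _))).2
        simpa [hi] using this

lemma generateFrom_cylSystem :
    (inferInstance : MeasurableSpace (ℕ → ℝ)) = MeasurableSpace.generateFrom cylSystem := by
  apply le_antisymm
  · have hpi : (inferInstance : MeasurableSpace (ℕ → ℝ)) =
        ⨆ i : ℕ, (inferInstance : MeasurableSpace ℝ).comap (fun x : ℕ → ℝ => x i) := rfl
    rw [hpi]
    refine iSup_le fun i => ?_
    have hmeas : @Measurable (ℕ → ℝ) ℝ (MeasurableSpace.generateFrom cylSystem) _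
        (fun x : ℕ → ℝ => x i) := by
      intro s hs
      apply MeasurableSpace.measurableSet_generateFrom
      refine ⟨i + 1, fun j => if j = i then s else Set.univ, fun j => ?_, ?_⟩
      · dsimp only
        split
        · exact hs
        · exact MeasurableSet.univ
      · ext x
        simp only [Cyl, Set.mem_preimage, Set.mem_setOf_eq]
        constructor
        · intro hx j _
          split
          · subst ‹j = i›; exact hx
          · trivial
        · intro hx
          have := hx i (Nat.lt_succ_self i)
          simpa using this
    exact measurable_iff_comap_le.mp hmeas
  · refine MeasurableSpace.generateFrom_le ?_
    rintro s ⟨m, A, hA, rfl⟩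
    exact measurableSet_Cyl hA

/-- The core computation: the measure of a cylinder intersected with `RIn m`. -/
lemma core {k : ℕ} {μk : Measure (ℕ → ℝ)} (hμ : IsProdWithUniform k μk)
    {m : ℕ} (hm : k ≤ m) {A : ℕ → Set ℝ} (hA : ∀ i, MeasurableSet (A i))
    (hfin : ∀ i, i < k → volume (A i) ≠ ∞) :
    μk (Cyl m A ∩ RIn m) =
      (∏ i ∈ Finset.range k, volume (A i)) * ∏ i ∈ Finset.Ico k m, volume (A i ∩ Icube) := by
  set A' : ℕ → Set ℝ := fun i => if i < m then A i else Icube with hA'def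
  have hA' : ∀ i, MeasurableSet (A' i) := by
    intro i
    simp only [A']
    split
    · exact hA i
    · exact measurableSet_Icube
  have hval : ∀ n, μk (Cyl (m + n) A') =
      (∏ i ∈ Finset.range k, volume (A i)) * ∏ i ∈ Finset.Ico k m, volume (A i ∩ Icube) := by
    intro n
    have h0 : μk (Cyl (m + n) A') =
        (∏ i ∈ Finset.range k, volume (A' i)) *
          ∏ i ∈ Finset.Ico k (m + n), volume (A' i ∩ Icube) :=
      hμ (m + n) (le_trans hm (Nat.le_add_right _ _)) A' hA'
    rw [h0]
    congr 1
    · refine Finset.prod_congr rfl fun i hi => ?_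
      have : i < m := lt_of_lt_of_le (Finset.mem_range.mp hi) hm
      simp [A', this]
    · rw [← Finset.prod_Ico_consecutive _ hm (Nat.le_add_right m n)]
      have h1 : ∏ i ∈ Finset.Ico k m, volume (A' i ∩ Icube) =
          ∏ i ∈ Finset.Ico k m, volume (A i ∩ Icube) :=
        Finset.prod_congr rfl fun i hi => by
          have := (Finset.mem_Ico.mp hi).2; simp [A', this]
      have h2 : ∏ i ∈ Finset.Ico m (m + n), volume (A' i ∩ Icube) = 1 := by
        refine Finset.prod_eq_one fun i hi => ?_
        have : ¬ i < m := not_lt.mpr (Finset.mem_Ico.mp hi).1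
        simp [A', this, volume_Icube]
      rw [h1, h2, mul_one]
  have hRHSfin : (∏ i ∈ Finset.range k, volume (A i)) *
      ∏ i ∈ Finset.Ico k m, volume (A i ∩ Icube) ≠ ∞ := by
    refine ENNReal.mul_ne_top (ENNReal.prod_ne_top fun i hi => hfin i (Finset.mem_range.mp hi))
      (ENNReal.prod_ne_top fun i _ => ?_)
    have h1 : volume (A i ∩ Icube) ≤ 1 := by
      rw [← volume_Icube]
      exact measure_mono Set.inter_subset_right
    exact ne_top_of_le_ne_top ENNReal.one_ne_top h1
  have hset : Cyl m A ∩ RIn m = ⋂ n, Cyl (m + n) A' := by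
    ext x
    simp only [Cyl, RIn, Set.mem_inter_iff, Set.mem_setOf_eq, Set.mem_iInter]
    constructor
    · rintro ⟨h1, h2⟩ n i _
      by_cases h : i < m
      · simpa [A', h] using h1 i h
      · simpa [A', h] using h2 i (not_lt.mp h)
    · intro h
      constructor
      · intro i hi
        have := h 0 i (by omega)
        simpa [A', hi] using this
      · intro i hi
        have := h (i + 1) i (by omega)
        simpa [A', not_lt.mpr hi] using this
  rw [hset]
  have hanti : Antitone fun n => Cyl (m + n) A' := by
    intro a b hab x hx i hi
    exact hx i (by omega)
  rw [hanti.measure_iInter (fun n => (measurableSet_Cyl hA').nullMeasurableSet)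
    ⟨0, by rw [hval 0]; exact hRHSfin⟩]
  simp only [hval, iInf_const]

/-- Agreement of `μₖ` and `μₖ₊₁` on cylinders (with finite first coordinates)
intersected with `RIn k`. -/
lemma measure_cyl_inter_RIn_succ {k : ℕ} {μa μb : Measure (ℕ → ℝ)}
    (ha : IsProdWithUniform k μa) (hb : IsProdWithUniform (k + 1) μb)
    {m : ℕ} (hm : k + 1 ≤ m) {A : ℕ → Set ℝ} (hA : ∀ i, MeasurableSet (A i))
    (hfin : ∀ i, i < k + 1 → volume (A i) ≠ ∞) :
    μa (Cyl m A ∩ RIn k) = μb (Cyl m A ∩ RIn k) := by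
  set A'' : ℕ → Set ℝ := fun i => if k ≤ i then A i ∩ Icube else A i with hA''def
  have hA'' : ∀ i, MeasurableSet (A'' i) := by
    intro i
    simp only [A'']
    split
    · exact (hA i).inter measurableSet_Icube
    · exact hA i
  have hsub : ∀ i, A'' i ⊆ A i := by
    intro i
    simp only [A'']
    split
    · exact Set.inter_subset_left
    · exact le_refl _
  have hfin'' : ∀ i, i < k + 1 → volume (A'' i) ≠ ∞ := fun i hi =>
    ne_top_of_le_ne_top (hfin i hi) (measure_mono (hsub i))
  have hset : Cyl m A ∩ RIn k = Cyl m A'' ∩ RIn m := by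
    ext x
    simp only [Cyl, RIn, Set.mem_inter_iff, Set.mem_setOf_eq]
    constructor
    · rintro ⟨h1, h2⟩
      refine ⟨fun i hi => ?_, fun i hi => h2 i (by omega)⟩
      by_cases h : k ≤ i
      · simp only [A'', if_pos h]
        exact ⟨h1 i hi, h2 i h⟩
      · simp only [A'', if_neg h]
        exact h1 i hi
    · rintro ⟨h1, h2⟩
      refine ⟨fun i hi => hsub i (h1 i hi), fun i hi => ?_⟩
      by_cases h : i < m
      · have := h1 i h
        simp only [A'', if_pos hi] at this
        exact this.2
      · exact h2 i (not_lt.mp h)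
  rw [hset, core ha (by omega) hA'' (fun i hi => hfin'' i (by omega)),
    core hb hm hA'' hfin'']
  rw [Finset.prod_range_succ,
    Finset.prod_eq_prod_Ico_succ_bot (show k < m by omega) (fun i => volume (A'' i ∩ Icube))]
  have hk : volume (A'' k ∩ Icube) = volume (A'' k) := by
    have : A'' k ∩ Icube = A'' k := by
      simp only [A'', if_pos (le_refl k), Set.inter_assoc, Set.inter_self]
    rw [this]
  rw [hk]
  ring

/-- Bounded boxes on the first `k+1` coordinates. -/
def Bnd (k n : ℕ) : Set (ℕ → ℝ) :=
  Cyl (k + 1) (fun _ => Set.Icc (-(n + 1 : ℝ)) (n + 1))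

lemma measurableSet_Bnd (k n : ℕ) : MeasurableSet (Bnd k n) :=
  measurableSet_Cyl fun _ => measurableSet_Icc

lemma volume_Icc_ne_top (a b : ℝ) : volume (Set.Icc a b) ≠ ∞ := by
  rw [Real.volume_Icc]; exact ENNReal.ofReal_ne_top

/-- The restrictions of `μₖ` and `μₖ₊₁` to `RIn k ∩ Bnd k n` agree. -/
lemma restrict_eq {k : ℕ} {μa μb : Measure (ℕ → ℝ)}
    (ha : IsProdWithUniform k μa) (hb : IsProdWithUniform (k + 1) μb) (n : ℕ) :
    μa.restrict (RIn k ∩ Bnd k n) = μb.restrict (RIn k ∩ Bnd k n) := by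
  have key : ∀ (m : ℕ) (A : ℕ → Set ℝ), (∀ i, MeasurableSet (A i)) →
      μa (Cyl m A ∩ (RIn k ∩ Bnd k n)) = μb (Cyl m A ∩ (RIn k ∩ Bnd k n)) := by
    intro m A hA
    set AB : ℕ → Set ℝ := fun i =>
      (if i < m then A i else Set.univ) ∩
        (if i < k + 1 then Set.Icc (-(n + 1 : ℝ)) (n + 1) else Set.univ) with hABdef
    have hAB : ∀ i, MeasurableSet (AB i) := by
      intro i
      refine MeasurableSet.inter ?_ ?_ <;> split <;>
        first | exact hA _ | exact measurableSet_Icc | exact MeasurableSet.univ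
    have hfinAB : ∀ i, i < k + 1 → volume (AB i) ≠ ∞ := by
      intro i hi
      refine ne_top_of_le_ne_top (volume_Icc_ne_top (-(n + 1 : ℝ)) (n + 1))
        (measure_mono ?_)
      intro x hx
      have := hx.2
      simpa [hi] using this
    have hset : Cyl m A ∩ (RIn k ∩ Bnd k n) = Cyl (max m (k + 1)) AB ∩ RIn k := by
      ext x
      simp only [Cyl, RIn, Bnd, Set.mem_inter_iff, Set.mem_setOf_eq]
      constructor
      · rintro ⟨h1, h2, h3⟩
        refine ⟨fun i _ => ⟨?_, ?_⟩, h2⟩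
        · split
          · exact h1 i ‹_›
          · trivial
        · split
          · exact h3 i ‹_›
          · trivial
      · rintro ⟨h1, h2⟩
        refine ⟨fun i hi => ?_, h2, fun i hi => ?_⟩
        · have := (h1 i (lt_of_lt_of_le hi (le_max_left _ _))).1
          simpa [hi] using this
        · have := (h1 i (lt_of_lt_of_le hi (le_max_right _ _))).2
          simpa [hi] using this
    rw [hset]
    exact measure_cyl_inter_RIn_succ ha hb (le_max_right _ _) hAB hfinAB
  have hfina : μa (RIn k ∩ Bnd k n) ≠ ∞ := by
    have hsub : RIn k ∩ Bnd k n ⊆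
        Cyl (k + 1) (fun _ => Set.Icc (-(n + 1 : ℝ)) (n + 1)) ∩ RIn (k + 1) := by
      rintro x ⟨h1, h2⟩
      exact ⟨h2, fun i hi => h1 i (by omega)⟩
    refine ne_top_of_le_ne_top ?_ (measure_mono hsub)
    rw [core ha (Nat.le_succ k) (fun _ => measurableSet_Icc)
      (fun i _ => volume_Icc_ne_top _ _)]
    refine ENNReal.mul_ne_top (ENNReal.prod_ne_top fun i _ => volume_Icc_ne_top _ _)
      (ENNReal.prod_ne_top fun i _ => ?_)
    exact ne_top_of_le_ne_top (volume_Icc_ne_top _ _) (measure_mono Set.inter_subset_left)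
  have : IsFiniteMeasure (μa.restrict (RIn k ∩ Bnd k n)) := by
    constructor
    rw [Measure.restrict_apply_univ]
    exact hfina.lt_top
  refine ext_of_generate_finite cylSystem generateFrom_cylSystem isPiSystem_cylSystem ?_ ?_
  · rintro s ⟨m, A, hA, rfl⟩
    rw [Measure.restrict_apply (measurableSet_Cyl hA),
      Measure.restrict_apply (measurableSet_Cyl hA)]
    exact key m A hA
  · rw [Measure.restrict_apply_univ, Measure.restrict_apply_univ]
    have h0 := key 0 (fun _ => Set.univ) (fun _ => MeasurableSet.univ)
    have hcyl : Cyl 0 (fun _ => (Set.univ : Set ℝ)) = Set.univ := by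
      ext x; simp [Cyl]
    rw [hcyl, Set.univ_inter] at h0
    exact h0

lemma mono_step (μ : ℕ → Measure (ℕ → ℝ)) (hμ : ∀ k, IsProdWithUniform k (μ k)) (k : ℕ)
    (A : Set (ℕ → ℝ)) (hA : MeasurableSet A) :
    μ k (A ∩ RIn k) ≤ μ (k + 1) (A ∩ RIn (k + 1)) := by
  have hUnion : A ∩ RIn k = ⋃ n, A ∩ (RIn k ∩ Bnd k n) := by
    ext x
    simp only [Set.mem_iUnion, Set.mem_inter_iff]
    constructor
    · rintro ⟨hx, hr⟩
      obtain ⟨n, hn⟩ := exists_nat_ge ((Finset.range (k + 1)).sup' (by simp) fun i => |x i|)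
      refine ⟨n, hx, hr, fun i hi => ?_⟩
      have h1 : |x i| ≤ (n : ℝ) :=
        le_trans (Finset.le_sup' (fun i => |x i|) (Finset.mem_range.mpr hi)) hn
      have h2 := abs_le.mp h1
      constructor <;> [linarith [h2.1]; linarith [h2.2]]
    · rintro ⟨n, hx, hr, _⟩
      exact ⟨hx, hr⟩
  have hmono : Monotone fun n => A ∩ (RIn k ∩ Bnd k n) := by
    intro a b hab x hx
    refine ⟨hx.1, hx.2.1, fun i hi => ?_⟩
    have := hx.2.2 i hi
    have hab' : (a : ℝ) ≤ b := Nat.cast_le.mpr hab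
    exact ⟨by linarith [this.1], by linarith [this.2]⟩
  calc μ k (A ∩ RIn k) = ⨆ n, μ k (A ∩ (RIn k ∩ Bnd k n)) := by
        rw [hUnion, hmono.measure_iUnion]
    _ ≤ μ (k + 1) (A ∩ RIn (k + 1)) := by
        refine iSup_le fun n => ?_
        have heq : μ k (A ∩ (RIn k ∩ Bnd k n)) = μ (k + 1) (A ∩ (RIn k ∩ Bnd k n)) := by
          rw [← Measure.restrict_apply hA, ← Measure.restrict_apply hA,
            restrict_eq (hμ k) (hμ (k + 1)) n]
        rw [heq]
        refine measure_mono ?_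
        rintro x ⟨hx, h1, _⟩
        exact ⟨hx, fun i hi => h1 i (by omega)⟩

end MSupAux

open MSupAux in
/-- `k ↦ μₖ(A ∩ ℝ_I^k)` is nondecreasing for every Borel set `A`, and
`m(A) = sup_k μₖ(A ∩ ℝ_I^k)` is a countably additive measure on the Borel σ-algebra
of `ℝ^ℕ`. -/
theorem mSup_is_countably_additive_measure
    (μ : ℕ → Measure (ℕ → ℝ)) (hμ : ∀ k, IsProdWithUniform k (μ k)) :
    (∀ A : Set (ℕ → ℝ), MeasurableSet A → Monotone fun k => μ k (A ∩ RIn k)) ∧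
    mSup μ ∅ = 0 ∧
    (∀ A : ℕ → Set (ℕ → ℝ), (∀ j, MeasurableSet (A j)) →
      Pairwise (Function.onFun Disjoint A) →
        mSup μ (⋃ j, A j) = ∑' j, mSup μ (A j)) := by
  have hmono : ∀ A : Set (ℕ → ℝ), MeasurableSet A → Monotone fun k => μ k (A ∩ RIn k) := by
    intro A hA
    exact monotone_nat_of_le_succ fun k => mono_step μ hμ k A hA
  refine ⟨hmono, ?_, ?_⟩
  · simp [mSup]
  · intro A hAm hAd
    simp only [mSup]
    have h1 : ∀ k, μ k ((⋃ j, A j) ∩ RIn k) = ∑' j, μ k (A j ∩ RIn k) := by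
      intro k
      rw [Set.iUnion_inter]
      exact measure_iUnion
        (fun i j hij => Disjoint.mono Set.inter_subset_left Set.inter_subset_left (hAd hij))
        (fun j => (hAm j).inter (measurableSet_RIn k))
    simp only [h1]
    set g : ℕ → ℕ → ℝ≥0∞ := fun k j => μ k (A j ∩ RIn k) with hg
    have hgmono : ∀ j, Monotone fun k => g k j := fun j => hmono (A j) (hAm j)
    calc ⨆ k, ∑' j, g k j = ⨆ k, ⨆ s : Finset ℕ, ∑ j ∈ s, g k j := by
          simp only [ENNReal.tsum_eq_iSup_sum]
      _ = ⨆ s : Finset ℕ, ⨆ k, ∑ j ∈ s, g k j := iSup_comm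
      _ = ⨆ s : Finset ℕ, ∑ j ∈ s, ⨆ k, g k j := by
          refine iSup_congr fun s => ?_
          exact (ENNReal.finsetSum_iSup_of_monotone fun j => hgmono j).symm
      _ = ∑' j, ⨆ k, g k j := ENNReal.tsum_eq_iSup_sum.symm
end

section
/- Let m be the measure on the Borel σ-algebra of ℝ^ℕ defined by m(A) = sup_k μ_k(A ∩ ℝ_I^k), where I = [−1/2,1/2], ℝ_I^k = {x ∈ ℝ^ℕ : x_i ∈ I for all i > k}, and μ_k is the product of k-dimensional Lebesgue measure on the first k coordinates with the countable product of uniform probability measures on I on the remaining coordinates. Then for every n ∈ ℕ and every Borel set A ⊆ ℝ^n, m({x ∈ ℝ^ℕ : (x_1, …, x_n) ∈ A and x_i ∈ I for all i > n}) = λ_n(A), where λ_n is n-dimensional Lebesgue measure. In particular m(I^ℕ) = 1. -/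
open MeasureTheory
open scoped ENNReal

lemma measurableSet_Icube : MeasurableSet Icube := measurableSet_Icc

lemma volume_Icube : volume Icube = 1 := by
  simp only [Icube, Real.volume_Icc]; norm_num

lemma measurableSet_RIn (k : ℕ) : MeasurableSet (RIn k) := by
  have : RIn k = ⋂ i, ⋂ (_ : k ≤ i), (fun x : ℕ → ℝ => x i) ⁻¹' Icube := by
    ext x; simp [RIn]
  rw [this]
  exact MeasurableSet.iInter fun i => MeasurableSet.iInter fun _ =>
    (measurable_pi_apply i) measurableSet_Icube

lemma prod_iSup_le {ι : Type*} (F : Finset ι) (f : ι → ℕ → ℝ≥0∞) (hf : ∀ i, Monotone (f i)) :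
    (∏ i ∈ F, ⨆ r, f i r) ≤ ⨆ r, ∏ i ∈ F, f i r := by
  classical
  induction F using Finset.induction_on with
  | empty => simp
  | @insert a F ha ih =>
    rw [Finset.prod_insert ha]
    refine (mul_le_mul_right ih _).trans ?_
    rw [ENNReal.mul_iSup]
    refine iSup_le fun r' => ?_
    rw [ENNReal.iSup_mul]
    refine iSup_le fun r => ?_
    refine le_trans ?_ (le_iSup (fun r => ∏ i ∈ insert a F, f i r) (max r r'))
    rw [Finset.prod_insert ha]
    exact mul_le_mul' (hf a (le_max_left _ _))
      (Finset.prod_le_prod' fun i _ => hf i (le_max_right _ _))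

lemma key_aux {k n : ℕ} {μk : Measure (ℕ → ℝ)} (h : IsProdWithUniform k μk)
    (s : Fin n → Set ℝ) (hs : ∀ i, MeasurableSet (s i))
    (hfin : (∏ i : Fin n, if (i : ℕ) < k then volume (s i) else volume (s i ∩ Icube)) ≠ ∞) :
    μk ((fun (x : ℕ → ℝ) (i : Fin n) => x (i : ℕ)) ⁻¹' Set.pi Set.univ s ∩ RIn (min k n)) =
      ∏ i : Fin n, if (i : ℕ) < k then volume (s i) else volume (s i ∩ Icube) := by
  classical
  set B : ℕ → Set ℝ := fun i => if hi : i < n then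
      (if i < k then s ⟨i, hi⟩ else s ⟨i, hi⟩ ∩ Icube) else Icube with hBdef
  have hBmeas : ∀ i, MeasurableSet (B i) := by
    intro i
    simp only [hBdef]
    split_ifs
    exacts [hs _, (hs _).inter measurableSet_Icube, measurableSet_Icube]
  set g : ℕ → ℝ≥0∞ := fun i => if i < k then volume (B i) else volume (B i ∩ Icube) with hgdef
  have hRHS : (∏ i : Fin n, if (i : ℕ) < k then volume (s i) else volume (s i ∩ Icube))
      = ∏ i ∈ Finset.range n, g i := by
    rw [← Fin.prod_univ_eq_prod_range g n]
    refine Finset.prod_congr rfl fun i _ => ?_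
    by_cases hik : (i : ℕ) < k
    · simp [hgdef, hBdef, hik, i.isLt]
    · simp only [hgdef, hBdef, hik, if_neg, dif_pos i.isLt, if_false]
      rw [Set.inter_assoc, Set.inter_self]
  have hCyl : ∀ m, max k n ≤ m →
      μk {x | ∀ i, i < m → x i ∈ B i} = ∏ i ∈ Finset.range n, g i := by
    intro m hm
    have hkm : k ≤ m := le_trans (le_max_left _ _) hm
    have hnm : n ≤ m := le_trans (le_max_right _ _) hm
    rw [h m hkm B hBmeas]
    have hIc : ∀ i, n ≤ i → volume (B i ∩ Icube) = 1 := by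
      intro i hi
      have : B i = Icube := by simp [hBdef, not_lt.mpr hi]
      rw [this, Set.inter_self, volume_Icube]
    rcases le_total k n with hkn | hnk
    · have e1 : ∏ i ∈ Finset.range k, volume (B i) = ∏ i ∈ Finset.range k, g i :=
        Finset.prod_congr rfl fun i hi => by
          simp [hgdef, Finset.mem_range.mp hi]
      have e2 : ∏ i ∈ Finset.Ico k m, volume (B i ∩ Icube)
          = (∏ i ∈ Finset.Ico k n, volume (B i ∩ Icube)) *
            ∏ i ∈ Finset.Ico n m, volume (B i ∩ Icube) :=
        (Finset.prod_Ico_consecutive _ hkn hnm).symm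
      have e3 : ∏ i ∈ Finset.Ico k n, volume (B i ∩ Icube) = ∏ i ∈ Finset.Ico k n, g i :=
        Finset.prod_congr rfl fun i hi => by
          simp [hgdef, not_lt.mpr (Finset.mem_Ico.mp hi).1]
      have e4 : ∏ i ∈ Finset.Ico n m, volume (B i ∩ Icube) = 1 :=
        Finset.prod_eq_one fun i hi => hIc i (Finset.mem_Ico.mp hi).1
      rw [e1, e2, e3, e4, mul_one, Finset.prod_range_mul_prod_Ico g hkn]
    · have e1 : ∏ i ∈ Finset.range k, volume (B i)
          = (∏ i ∈ Finset.range n, volume (B i)) * ∏ i ∈ Finset.Ico n k, volume (B i) :=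
        (Finset.prod_range_mul_prod_Ico _ hnk).symm
      have e2 : ∏ i ∈ Finset.Ico n k, volume (B i) = 1 :=
        Finset.prod_eq_one fun i hi => by
          have : B i = Icube := by simp [hBdef, not_lt.mpr (Finset.mem_Ico.mp hi).1]
          rw [this, volume_Icube]
      have e3 : ∏ i ∈ Finset.Ico k m, volume (B i ∩ Icube) = 1 :=
        Finset.prod_eq_one fun i hi => hIc i (le_trans hnk (Finset.mem_Ico.mp hi).1)
      have e4 : ∏ i ∈ Finset.range n, volume (B i) = ∏ i ∈ Finset.range n, g i :=
        Finset.prod_congr rfl fun i hi => by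
          simp [hgdef, lt_of_lt_of_le (Finset.mem_range.mp hi) hnk]
      rw [e1, e2, e3, e4, mul_one, mul_one]
  have hDeq : ((fun (x : ℕ → ℝ) (i : Fin n) => x (i : ℕ)) ⁻¹' Set.pi Set.univ s
        ∩ RIn (min k n))
      = ⋂ m : ℕ, {x : ℕ → ℝ | ∀ i, i < max k n + m → x i ∈ B i} := by
    ext x
    simp only [Set.mem_inter_iff, Set.mem_preimage, Set.mem_pi, Set.mem_univ,
      forall_true_left, Set.mem_iInter, Set.mem_setOf_eq, RIn]
    constructor
    · rintro ⟨h1, h2⟩ m i _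
      by_cases hi : i < n
      · simp only [hBdef, dif_pos hi]
        by_cases hik : i < k
        · simpa [hik] using h1 ⟨i, hi⟩
        · exact if_neg hik ▸ ⟨h1 ⟨i, hi⟩, h2 i (le_trans (min_le_left k n) (not_lt.mp hik))⟩
      · simp only [hBdef, dif_neg hi]
        exact h2 i (le_trans (min_le_right k n) (not_lt.mp hi))
    · intro hx
      have hx' : ∀ i, x i ∈ B i := fun i =>
        hx (i + 1) i (lt_of_lt_of_le (Nat.lt_succ_self i) (Nat.le_add_left _ _))
      constructor
      · intro i
        have := hx' i
        simp only [hBdef, dif_pos i.isLt] at this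
        split_ifs at this with hik
        · simpa using this
        · simpa using this.1
      · intro i hmin
        by_cases hi : i < n
        · have hk : k ≤ i := by omega
          have := hx' i
          simp only [hBdef, dif_pos hi, if_neg (not_lt.mpr hk)] at this
          exact this.2
        · have := hx' i
          simpa [hBdef, dif_neg hi] using this
  have hCm : ∀ M : ℕ, MeasurableSet {x : ℕ → ℝ | ∀ i, i < M → x i ∈ B i} := by
    intro M
    have : {x : ℕ → ℝ | ∀ i, i < M → x i ∈ B i}
        = ⋂ i, ⋂ (_ : i < M), (fun x : ℕ → ℝ => x i) ⁻¹' B i := by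
      ext x; simp
    rw [this]
    exact MeasurableSet.iInter fun i => MeasurableSet.iInter fun _ =>
      (measurable_pi_apply i) (hBmeas i)
  have hanti : Antitone fun m : ℕ => {x : ℕ → ℝ | ∀ i, i < max k n + m → x i ∈ B i} := by
    intro m m' hmm x hx i hi
    exact hx i (lt_of_lt_of_le hi (by omega))
  rw [hDeq, hanti.measure_iInter (fun m => (hCm _).nullMeasurableSet)
    ⟨0, by rw [hCyl _ (by omega)]; rw [hRHS] at hfin; exact hfin⟩]
  rw [hRHS]
  have : ∀ m : ℕ, μk {x : ℕ → ℝ | ∀ i, i < max k n + m → x i ∈ B i}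
      = ∏ i ∈ Finset.range n, g i := fun m => hCyl _ (by omega)
  simp [this]

lemma iUnion_IccNat : (⋃ r : ℕ, Set.Icc (-(r : ℝ)) r) = Set.univ := by
  ext x
  simp only [Set.mem_iUnion, Set.mem_Icc, Set.mem_univ, iff_true]
  refine ⟨⌈|x|⌉₊, ?_, ?_⟩
  · have h1 : |x| ≤ (⌈|x|⌉₊ : ℝ) := Nat.le_ceil _
    have := neg_abs_le x
    linarith
  · exact le_trans (le_abs_self x) (Nat.le_ceil _)

lemma key {k n : ℕ} {μk : Measure (ℕ → ℝ)} (h : IsProdWithUniform k μk)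
    (s : Fin n → Set ℝ) (hs : ∀ i, MeasurableSet (s i)) :
    μk ((fun (x : ℕ → ℝ) (i : Fin n) => x (i : ℕ)) ⁻¹' Set.pi Set.univ s ∩ RIn (min k n)) =
      ∏ i : Fin n, if (i : ℕ) < k then volume (s i) else volume (s i ∩ Icube) := by
  classical
  set s' : ℕ → Fin n → Set ℝ := fun r i => s i ∩ Set.Icc (-(r : ℝ)) r with hs'def
  have hs'meas : ∀ r i, MeasurableSet (s' r i) := fun r i => (hs i).inter measurableSet_Icc
  have hIccfin : ∀ r : ℕ, volume (Set.Icc (-(r : ℝ)) r) ≠ ∞ := by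
    intro r; rw [Real.volume_Icc]; exact ENNReal.ofReal_ne_top
  have hfin : ∀ r, (∏ i : Fin n,
      if (i : ℕ) < k then volume (s' r i) else volume (s' r i ∩ Icube)) ≠ ∞ := by
    intro r
    refine (ENNReal.prod_lt_top fun i _ => ?_).ne
    split_ifs
    · exact lt_of_le_of_lt (measure_mono Set.inter_subset_right) (hIccfin r).lt_top
    · exact lt_of_le_of_lt
        (measure_mono (Set.inter_subset_left.trans Set.inter_subset_right)) (hIccfin r).lt_top
  have hmono : Monotone fun r : ℕ =>
      (fun (x : ℕ → ℝ) (i : Fin n) => x (i : ℕ)) ⁻¹' Set.pi Set.univ (s' r)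
        ∩ RIn (min k n) := by
    intro r r' hrr
    refine Set.inter_subset_inter_left _ (Set.preimage_mono (Set.pi_mono fun i _ => ?_))
    exact Set.inter_subset_inter_right _
      (Set.Icc_subset_Icc (neg_le_neg (Nat.cast_le.mpr hrr)) (Nat.cast_le.mpr hrr))
  have hUeq : ((fun (x : ℕ → ℝ) (i : Fin n) => x (i : ℕ)) ⁻¹' Set.pi Set.univ s
        ∩ RIn (min k n))
      = ⋃ r : ℕ, ((fun (x : ℕ → ℝ) (i : Fin n) => x (i : ℕ)) ⁻¹' Set.pi Set.univ (s' r)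
        ∩ RIn (min k n)) := by
    ext x
    simp only [Set.mem_iUnion, Set.mem_inter_iff, Set.mem_preimage, Set.mem_pi, Set.mem_univ,
      forall_true_left, hs'def, Set.mem_inter_iff, Set.mem_Icc]
    constructor
    · rintro ⟨h1, h2⟩
      set c : ℕ := Finset.univ.sup fun i : Fin n => ⌈|x (i : ℕ)|⌉₊ with hc
      refine ⟨c, fun i => ⟨h1 i, ?_, ?_⟩, h2⟩
      · have h3 : |x (i : ℕ)| ≤ ((⌈|x (i : ℕ)|⌉₊ : ℕ) : ℝ) := Nat.le_ceil _
        have h4 : ((⌈|x (i : ℕ)|⌉₊ : ℕ) : ℝ) ≤ (c : ℝ) :=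
          Nat.cast_le.mpr (hc ▸ Finset.le_sup (f := fun j : Fin n => ⌈|x (j : ℕ)|⌉₊) (Finset.mem_univ i))
        have := neg_abs_le (x (i : ℕ))
        linarith
      · have h3 : |x (i : ℕ)| ≤ ((⌈|x (i : ℕ)|⌉₊ : ℕ) : ℝ) := Nat.le_ceil _
        have h4 : ((⌈|x (i : ℕ)|⌉₊ : ℕ) : ℝ) ≤ (c : ℝ) :=
          Nat.cast_le.mpr (hc ▸ Finset.le_sup (f := fun j : Fin n => ⌈|x (j : ℕ)|⌉₊) (Finset.mem_univ i))
        exact le_trans (le_trans (le_abs_self _) h3) h4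
    · rintro ⟨r, h1, h2⟩
      exact ⟨fun i => (h1 i).1, h2⟩
  rw [hUeq, hmono.measure_iUnion]
  have hval : ∀ r, μk ((fun (x : ℕ → ℝ) (i : Fin n) => x (i : ℕ)) ⁻¹' Set.pi Set.univ (s' r)
        ∩ RIn (min k n))
      = ∏ i : Fin n, if (i : ℕ) < k then volume (s' r i) else volume (s' r i ∩ Icube) :=
    fun r => key_aux h (s' r) (hs'meas r) (hfin r)
  simp only [hval]
  -- now swap sup and product
  set f : Fin n → ℕ → ℝ≥0∞ := fun i r =>
    if (i : ℕ) < k then volume (s' r i) else volume (s' r i ∩ Icube) with hfdef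
  have hfmono : ∀ i, Monotone (f i) := by
    intro i r r' hrr
    have hsub : s' r i ⊆ s' r' i := Set.inter_subset_inter_right _
      (Set.Icc_subset_Icc (neg_le_neg (Nat.cast_le.mpr hrr)) (Nat.cast_le.mpr hrr))
    simp only [hfdef]
    split_ifs
    · exact measure_mono hsub
    · exact measure_mono (Set.inter_subset_inter_left _ hsub)
  have hsupf : ∀ i : Fin n, (⨆ r, f i r)
      = if (i : ℕ) < k then volume (s i) else volume (s i ∩ Icube) := by
    intro i
    have hU1 : (⋃ r : ℕ, s' r i) = s i := by
      rw [hs'def]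
      simp only
      rw [← Set.inter_iUnion, iUnion_IccNat, Set.inter_univ]
    have hm1 : Monotone fun r : ℕ => s' r i := fun r r' hrr =>
      Set.inter_subset_inter_right _
        (Set.Icc_subset_Icc (neg_le_neg (Nat.cast_le.mpr hrr)) (Nat.cast_le.mpr hrr))
    simp only [hfdef]
    split_ifs
    · rw [← hU1, hm1.measure_iUnion]
    · have hU2 : (⋃ r : ℕ, s' r i ∩ Icube) = s i ∩ Icube := by
        rw [← Set.iUnion_inter, hU1]
      have hm2 : Monotone fun r : ℕ => s' r i ∩ Icube := fun r r' hrr =>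
        Set.inter_subset_inter_left _ (hm1 hrr)
      rw [← hU2, hm2.measure_iUnion]
  refine le_antisymm (iSup_le fun r => Finset.prod_le_prod' fun i _ => ?_) ?_
  · rw [← hsupf i]
    exact le_iSup (f i) r
  · calc (∏ i : Fin n, if (i : ℕ) < k then volume (s i) else volume (s i ∩ Icube))
        = ∏ i : Fin n, ⨆ r, f i r := Finset.prod_congr rfl fun i _ => (hsupf i).symm
      _ ≤ ⨆ r, ∏ i : Fin n, f i r := prod_iSup_le _ _ hfmono

lemma nu_restrict {k n : ℕ} {μk : Measure (ℕ → ℝ)} (h : IsProdWithUniform k μk) :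
    Measure.map (fun (x : ℕ → ℝ) (i : Fin n) => x (i : ℕ)) (μk.restrict (RIn (min k n)))
      = volume.restrict
          (Set.pi Set.univ fun i : Fin n => if (i : ℕ) < k then Set.univ else Icube) := by
  classical
  have hproj : Measurable fun (x : ℕ → ℝ) (i : Fin n) => x (i : ℕ) :=
    measurable_pi_lambda _ fun i => measurable_pi_apply _
  have htmeas : ∀ i : Fin n, MeasurableSet (if (i : ℕ) < k then (Set.univ : Set ℝ) else Icube) :=
    fun i => by split_ifs; exacts [MeasurableSet.univ, measurableSet_Icube]
  have h1 : Measure.pi (fun i : Fin n =>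
        volume.restrict (if (i : ℕ) < k then Set.univ else Icube))
      = Measure.map (fun (x : ℕ → ℝ) (i : Fin n) => x (i : ℕ)) (μk.restrict (RIn (min k n))) := by
    refine Measure.pi_eq fun s hs => ?_
    rw [Measure.map_apply hproj (MeasurableSet.univ_pi hs),
      Measure.restrict_apply (hproj (MeasurableSet.univ_pi hs)), key h s hs]
    refine Finset.prod_congr rfl fun i _ => ?_
    rw [Measure.restrict_apply (hs i)]
    split_ifs
    · rw [Set.inter_univ]
    · rfl
  have h2 : Measure.pi (fun i : Fin n =>
        volume.restrict (if (i : ℕ) < k then Set.univ else Icube))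
      = volume.restrict
          (Set.pi Set.univ fun i : Fin n => if (i : ℕ) < k then Set.univ else Icube) := by
    refine Measure.pi_eq fun s hs => ?_
    rw [Measure.restrict_apply (MeasurableSet.univ_pi hs), ← Set.pi_inter_distrib,
      volume_pi_pi]
    refine Finset.prod_congr rfl fun i _ => ?_
    rw [Measure.restrict_apply (hs i)]
  rw [← h1, h2]

theorem mSup_on_cylinders_eq_lebesgue'
    (μ : ℕ → Measure (ℕ → ℝ)) (hμ : ∀ k, IsProdWithUniform k (μ k)) :
    (∀ (n : ℕ) (A : Set (Fin n → ℝ)), MeasurableSet A →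
      (⨆ k, μ k ({x : ℕ → ℝ | (fun i : Fin n => x (i : ℕ)) ∈ A ∧ ∀ i, n ≤ i → x i ∈ Icube} ∩ RIn k)) =
        volume A) ∧
    (⨆ k, μ k ({x : ℕ → ℝ | ∀ i, x i ∈ Icube} ∩ RIn k)) = 1 := by
  classical
  have hproj : ∀ n : ℕ, Measurable fun (x : ℕ → ℝ) (i : Fin n) => x (i : ℕ) :=
    fun n => measurable_pi_lambda _ fun i => measurable_pi_apply _
  have main : ∀ (n : ℕ) (A : Set (Fin n → ℝ)), MeasurableSet A →
      (⨆ k, μ k ({x : ℕ → ℝ | (fun i : Fin n => x (i : ℕ)) ∈ A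
          ∧ ∀ i, n ≤ i → x i ∈ Icube} ∩ RIn k)) = volume A := by
    intro n A hA
    have hSeq : ∀ k, {x : ℕ → ℝ | (fun i : Fin n => x (i : ℕ)) ∈ A
          ∧ ∀ i, n ≤ i → x i ∈ Icube} ∩ RIn k
        = (fun (x : ℕ → ℝ) (i : Fin n) => x (i : ℕ)) ⁻¹' A ∩ RIn (min k n) := by
      intro k
      ext x
      simp only [Set.mem_inter_iff, Set.mem_setOf_eq, Set.mem_preimage, RIn]
      constructor
      · rintro ⟨⟨h1, h2⟩, h3⟩
        refine ⟨h1, fun i hi => ?_⟩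
        rcases min_le_iff.mp hi with h' | h'
        · exact h3 i h'
        · exact h2 i h'
      · rintro ⟨h1, h2⟩
        exact ⟨⟨h1, fun i hi => h2 i (le_trans (min_le_right k n) hi)⟩,
          fun i hi => h2 i (le_trans (min_le_left k n) hi)⟩
    have hval : ∀ k, μ k ({x : ℕ → ℝ | (fun i : Fin n => x (i : ℕ)) ∈ A
          ∧ ∀ i, n ≤ i → x i ∈ Icube} ∩ RIn k)
        = volume (A ∩ Set.pi Set.univ fun i : Fin n =>
            if (i : ℕ) < k then Set.univ else Icube) := by
      intro k
      rw [hSeq k, ← Measure.restrict_apply (hproj n hA),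
        ← Measure.map_apply (hproj n) hA, nu_restrict (hμ k), Measure.restrict_apply hA]
    simp only [hval]
    refine le_antisymm (iSup_le fun k => measure_mono Set.inter_subset_left) ?_
    have hn : (A ∩ Set.pi Set.univ fun i : Fin n =>
        if (i : ℕ) < n then Set.univ else Icube) = A := by
      have : (Set.pi Set.univ fun i : Fin n =>
          if (i : ℕ) < n then Set.univ else Icube) = Set.univ := by
        ext y
        simp only [Set.mem_pi, Set.mem_univ, forall_true_left, iff_true]
        intro i
        rw [if_pos i.isLt]
        trivial
      rw [this, Set.inter_univ]
    refine le_trans ?_ (le_iSup (fun k => volume (A ∩ Set.pi Set.univ fun i : Fin n =>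
        if (i : ℕ) < k then Set.univ else Icube)) n)
    rw [hn]
  refine ⟨main, ?_⟩
  have h0 := main 0 Set.univ MeasurableSet.univ
  have hset : {x : ℕ → ℝ | (fun i : Fin 0 => x (i : ℕ)) ∈ (Set.univ : Set (Fin 0 → ℝ))
      ∧ ∀ i, 0 ≤ i → x i ∈ Icube} = {x : ℕ → ℝ | ∀ i, x i ∈ Icube} := by
    ext x; simp
  rw [hset] at h0
  rw [h0]
  rw [MeasureTheory.volume_pi, Measure.pi_univ]
  simp

/-- on finite-dimensional cylinders `A × I_n` the measure
`m(A) = sup_k μₖ(A ∩ ℝ_I^k)` coincides with `n`-dimensional Lebesgue measure;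
in particular `m(I^ℕ) = 1`. -/
theorem mSup_on_cylinders_eq_lebesgue
    (μ : ℕ → Measure (ℕ → ℝ)) (hμ : ∀ k, IsProdWithUniform k (μ k)) :
    (∀ (n : ℕ) (A : Set (Fin n → ℝ)), MeasurableSet A →
      mSup μ {x : ℕ → ℝ | (fun i : Fin n => x (i : ℕ)) ∈ A ∧ ∀ i, n ≤ i → x i ∈ Icube} =
        volume A) ∧
    mSup μ {x : ℕ → ℝ | ∀ i, x i ∈ Icube} = 1 := by
  simp only [mSup]
  exact mSup_on_cylinders_eq_lebesgue' μ hμ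
end

section
/- Let m be the measure on the Borel σ-algebra of ℝ^ℕ defined by m(A) = sup_k μ_k(A ∩ ℝ_I^k), where I = [−1/2,1/2], ℝ_I^k = {x ∈ ℝ^ℕ : x_i ∈ I for all i > k}, and μ_k is the product of k-dimensional Lebesgue measure on the first k coordinates with the countable product of uniform probability measures on I on the remaining coordinates. Then m is σ-finite: there exists a countable family {A_j} of Borel sets with m(A_j) < ∞ for each j and a Borel set N with m(N) = 0 such that ℝ^ℕ = (⋃_j A_j) ∪ N. -/
open MeasureTheory
open scoped ENNReal

lemma mSup_compl_iUnion_RIn (μ : ℕ → Measure (ℕ → ℝ)) : mSup μ (⋃ k, RIn k)ᶜ = 0 := by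
  have hdisj : ∀ k, (⋃ l, RIn l)ᶜ ∩ RIn k = ∅ := fun k =>
    Set.eq_empty_iff_forall_notMem.mpr fun _ hx => hx.1 (Set.mem_iUnion.mpr ⟨k, hx.2⟩)
  simp only [mSup, hdisj, measure_empty, ciSup_const]

lemma measure_univ_pi_le_prod_volume {j k : ℕ} {μj : Measure (ℕ → ℝ)}
    (hμ : IsProdWithUniform j μj) {B : ℕ → Set ℝ} (hB : ∀ i, MeasurableSet (B i))
    (hB_one : ∀ i, k ≤ i → volume (B i) = 1) :
    μj (Set.univ.pi B) ≤ ∏ i ∈ Finset.range k, volume (B i) := by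
  set m := max j k
  have hcyl : Set.univ.pi B ⊆ {x | ∀ i, i < m → x i ∈ B i} := fun x hx i _ => hx i trivial
  have htail : ∏ i ∈ Finset.Ico k m, volume (B i) = 1 :=
    Finset.prod_eq_one fun i hi => hB_one i (Finset.mem_Ico.mp hi).1
  calc μj (Set.univ.pi B)
      ≤ μj {x | ∀ i, i < m → x i ∈ B i} := measure_mono hcyl
    _ = (∏ i ∈ Finset.range j, volume (B i)) * ∏ i ∈ Finset.Ico j m, volume (B i ∩ Icube) :=
        hμ m (le_max_left j k) B hB
    _ ≤ (∏ i ∈ Finset.range j, volume (B i)) * ∏ i ∈ Finset.Ico j m, volume (B i) := by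
        gcongr with i
        exact Set.inter_subset_left
    _ = ∏ i ∈ Finset.range m, volume (B i) :=
        Finset.prod_range_mul_prod_Ico _ (le_max_left j k)
    _ = ∏ i ∈ Finset.range k, volume (B i) := by
        rw [← Finset.prod_range_mul_prod_Ico _ (le_max_right j k), htail, mul_one]

lemma mSup_univ_pi_le_prod_volume {μ : ℕ → Measure (ℕ → ℝ)}
    (hμ : ∀ j, IsProdWithUniform j (μ j)) {k : ℕ} {B : ℕ → Set ℝ}
    (hB : ∀ i, MeasurableSet (B i)) (hB_one : ∀ i, k ≤ i → volume (B i) = 1) :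
    mSup μ (Set.univ.pi B) ≤ ∏ i ∈ Finset.range k, volume (B i) :=
  iSup_le fun j => (measure_mono Set.inter_subset_left).trans
    (measure_univ_pi_le_prod_volume (hμ j) hB hB_one)

def boxSide (r : ℝ) (k i : ℕ) : Set ℝ := if i < k then Set.Icc (-r) r else Icube

lemma measurableSet_boxSide (r : ℝ) (k i : ℕ) : MeasurableSet (boxSide r k i) := by
  unfold boxSide
  split_ifs <;> exact measurableSet_Icc

lemma mSup_univ_pi_boxSide_lt_top {μ : ℕ → Measure (ℕ → ℝ)}
    (hμ : ∀ j, IsProdWithUniform j (μ j)) (r : ℝ) (k : ℕ) :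
    mSup μ (Set.univ.pi (boxSide r k)) < ⊤ := by
  refine (mSup_univ_pi_le_prod_volume (k := k) hμ (measurableSet_boxSide r k)
    fun i hi => ?_).trans_lt ?_
  · rw [boxSide, if_neg (not_lt.mpr hi), volume_Icube]
  · exact ENNReal.prod_lt_top fun i _ => by
      unfold boxSide
      split_ifs
      · exact measure_Icc_lt_top
      · exact volume_Icube ▸ ENNReal.one_lt_top

lemma exists_mem_univ_pi_boxSide {k : ℕ} {x : ℕ → ℝ} (hx : x ∈ RIn k) :
    ∃ n : ℕ, x ∈ Set.univ.pi (boxSide n k) := by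
  obtain ⟨n, hn⟩ := exists_nat_ge (∑ i ∈ Finset.range k, |x i|)
  refine ⟨n, fun i _ => ?_⟩
  unfold boxSide
  split_ifs with hik
  · refine abs_le.mp (le_trans ?_ hn)
    exact Finset.single_le_sum (fun i _ => abs_nonneg (x i)) (Finset.mem_range.mpr hik)
  · exact hx i (not_lt.mp hik)

/-- the measure `m(A) = sup_k μₖ(A ∩ ℝ_I^k)` is σ-finite: `ℝ^ℕ` is the
union of countably many Borel sets of finite `m`-measure together with an `m`-null
Borel set. -/
theorem mSup_sigma_finite
    (μ : ℕ → Measure (ℕ → ℝ)) (hμ : ∀ k, IsProdWithUniform k (μ k)) :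
    ∃ A : ℕ → Set (ℕ → ℝ), ∃ N : Set (ℕ → ℝ),
      (∀ j, MeasurableSet (A j)) ∧ (∀ j, mSup μ (A j) < ⊤) ∧
      MeasurableSet N ∧ mSup μ N = 0 ∧
      (Set.univ : Set (ℕ → ℝ)) = (⋃ j, A j) ∪ N := by
  refine ⟨fun j => Set.univ.pi (boxSide j.unpair.1 j.unpair.2), (⋃ k, RIn k)ᶜ,
    fun j => MeasurableSet.univ_pi (measurableSet_boxSide _ _),
    fun j => mSup_univ_pi_boxSide_lt_top hμ _ _,
    (MeasurableSet.iUnion measurableSet_RIn).compl, mSup_compl_iUnion_RIn μ, ?_⟩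
  refine (Set.eq_univ_of_forall fun x => ?_).symm
  by_cases hx : x ∈ ⋃ k, RIn k
  · obtain ⟨k, hk⟩ := Set.mem_iUnion.mp hx
    obtain ⟨n, hn⟩ := exists_mem_univ_pi_boxSide hk
    exact Or.inl (Set.mem_iUnion.mpr ⟨Nat.pair n k, by simpa only [Nat.unpair_pair] using hn⟩)
  · exact Or.inr hx
end
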